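/- Let L be a finite-dimensional Lie algebra over a field F. If I is a solregular ideal of L, then R(I) ⊆ R(L). -/

import Mathlib

namespace Paper

open LieAlgebra

section AlgDefs

variable (F : Type*) [Field F] (L : Type*) [LieRing L] [LieAlgebra F L]

/-- The nilradical of a Lie algebra: the largest nilpotent ideal (the sup of nilpotent ideals). -/
noncomputable def nilrad : LieIdeal F L :=
  sSup {I : LieIdeal F L | LieRing.IsNilpotent I}

/-- The nilpotency class of a Lie algebra. -/
noncomputable def nilClass : ℕ := sInf {k | LieModule.lowerCentralSeries F L L k = ⊥}

/-- A Lie algebra is nilregular if the field has characteristic zero, or characteristic `p > 0`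
and its nilradical has nilpotency class less than `p - 1`. -/
noncomputable def Nilregular : Prop :=
  ringChar F = 0 ∨ nilClass F (nilrad F L) < ringChar F - 1

/-- A Lie algebra is solregular if the field has characteristic zero, or characteristic `p > 0`
and its radical has derived length less than `log₂ p`. -/
noncomputable def Solregular : Prop :=
  ringChar F = 0 ∨ 2 ^ LieAlgebra.derivedLength F (LieAlgebra.radical F L) < ringChar F

/-- Regular means nilregular or solregular. -/
noncomputable def Regular : Prop := Nilregular F L ∨ Solregular F L

end AlgDefs

section IdealDefs

variable {F : Type*} [Field F] {L : Type*} [LieRing L] [LieAlgebra F L]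

/-- The centraliser `C_L(I)` of an ideal `I`, as an ideal of `L`. -/
def centralizer (I : LieIdeal F L) : LieIdeal F L where
  carrier := {x : L | ∀ y ∈ I, ⁅x, y⁆ = 0}
  zero_mem' := by intro y hy; simp
  add_mem' := by intro a b ha hb y hy; rw [add_lie, ha y hy, hb y hy, add_zero]
  smul_mem' := by intro c x hx y hy; rw [smul_lie, hx y hy, smul_zero]
  lie_mem := by
    intro x m hm y hy
    have h1 : ⁅x, ⁅m, y⁆⁆ = (0 : L) := by rw [hm y hy, lie_zero]
    have h2 : ⁅m, ⁅x, y⁆⁆ = (0 : L) := hm _ (I.lie_mem hy)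
    show ⁅⁅x, m⁆, y⁆ = (0 : L)
    rw [lie_lie, h1, h2, sub_zero]

/-- The centre `Z(I)` of an ideal `I`, as an ideal of `L`. -/
def idealCenter (I : LieIdeal F L) : LieIdeal F L where
  carrier := {x : L | x ∈ I ∧ ∀ y ∈ I, ⁅x, y⁆ = 0}
  zero_mem' := ⟨I.zero_mem, by intro y hy; simp⟩
  add_mem' := by
    intro a b ha hb
    exact ⟨I.add_mem ha.1 hb.1, fun y hy => by rw [add_lie, ha.2 y hy, hb.2 y hy, add_zero]⟩
  smul_mem' := by
    intro c x hx
    exact ⟨I.smul_mem c hx.1, fun y hy => by rw [smul_lie, hx.2 y hy, smul_zero]⟩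
  lie_mem := by
    intro x m hm
    refine ⟨I.lie_mem hm.1, fun y hy => ?_⟩
    have h1 : ⁅x, ⁅m, y⁆⁆ = (0 : L) := by rw [hm.2 y hy, lie_zero]
    have h2 : ⁅m, ⁅x, y⁆⁆ = (0 : L) := hm.2 _ (I.lie_mem hy)
    show ⁅⁅x, m⁆, y⁆ = (0 : L)
    rw [lie_lie, h1, h2, sub_zero]

/-- The centraliser `C_L(A/B)` of a chief factor, as an ideal of `L`. -/
def chiefCentralizer (A B : LieIdeal F L) : LieIdeal F L where
  carrier := {x : L | ∀ a ∈ A, ⁅x, a⁆ ∈ B}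
  zero_mem' := by intro a ha; simp [B.zero_mem]
  add_mem' := by intro x y hx hy a ha; rw [add_lie]; exact B.add_mem (hx a ha) (hy a ha)
  smul_mem' := by intro c x hx a ha; rw [smul_lie]; exact B.smul_mem c (hx a ha)
  lie_mem := by
    intro x m hm a ha
    show ⁅⁅x, m⁆, a⁆ ∈ B
    rw [lie_lie]
    exact B.sub_mem (B.lie_mem (hm a ha)) (hm _ (A.lie_mem ha))

/-- `A/Z` is a minimal ideal of `L/Z` (via the ideal correspondence). -/
def IsMinModIdeal (Z A : LieIdeal F L) : Prop :=
  Z < A ∧ ∀ B : LieIdeal F L, Z ≤ B → B ≤ A → B = Z ∨ B = A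

/-- `A` is a minimal ideal of `L`. -/
def IsMinimalIdeal (A : LieIdeal F L) : Prop := IsMinModIdeal ⊥ A

/-- An ideal `A` of `L` is quasi-minimal if `A² = A` and `A/Z(A)` is a minimal ideal
of `L/Z(A)`. -/
def IsQuasiMinimal (A : LieIdeal F L) : Prop :=
  ⁅A, A⁆ = A ∧ IsMinModIdeal (idealCenter A) A

end IdealDefs

section MoreDefs

variable (F : Type*) [Field F] (L : Type*) [LieRing L] [LieAlgebra F L]

/-- `E†(L)`: the subalgebra generated by the quasi-minimal components of `L`. -/
noncomputable def Edagger : LieSubalgebra F L :=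
  LieSubalgebra.lieSpan F L (⋃ A ∈ {A : LieIdeal F L | IsQuasiMinimal A}, (A : Set L))

/-- `N†(L) = N(L) + E†(L)`: the quasi-minimal radical of `L`. -/
noncomputable def Ndagger : LieSubalgebra F L :=
  (nilrad F L).toLieSubalgebra ⊔ Edagger F L

/-- The generalised nilradical `N*(L)`: the ideal containing `N = N(L)` with
`N*(L)/N` the sum of all minimal ideals of `L/N` contained in `(N + C_L(N))/N`. -/
noncomputable def Nstar : LieIdeal F L :=
  nilrad F L ⊔ sSup {A : LieIdeal F L | IsMinModIdeal (nilrad F L) A ∧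
    A ≤ nilrad F L ⊔ centralizer (nilrad F L)}

/-- The Frattini ideal: the largest ideal contained in every maximal subalgebra. -/
def frattini : LieIdeal F L :=
  sSup {I : LieIdeal F L | ∀ M : LieSubalgebra F L, IsCoatom M → (I : Set L) ⊆ M}

/-- `Ñ(L)`: the ideal with `Ñ(L)/φ(L) = Soc (L/φ(L))`. -/
noncomputable def Ntilde : LieIdeal F L :=
  frattini F L ⊔ sSup {A : LieIdeal F L | IsMinModIdeal (frattini F L) A}

/-- A characteristic ideal: one invariant under all derivations. -/
def IsCharIdeal (J : LieIdeal F L) : Prop :=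
  ∀ D : LieDerivation F L L, ∀ x ∈ J, D x ∈ J

/-- The characteristic radical `R_c(L)`: the sum of all solvable characteristic ideals. -/
noncomputable def charRadical : LieIdeal F L :=
  sSup {J : LieIdeal F L | LieAlgebra.IsSolvable J ∧ IsCharIdeal F L J}

/-- A subideal: a subalgebra joined to `L` by a chain of successive ideals. -/
def IsSubideal (S : LieSubalgebra F L) : Prop :=
  ∃ n : ℕ, ∃ c : Fin (n + 1) → LieSubalgebra F L,
    c 0 = S ∧ c (Fin.last n) = ⊤ ∧
    ∀ i : Fin n, c i.castSucc ≤ c i.succ ∧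
      ∀ x ∈ c i.succ, ∀ y ∈ c i.castSucc, ⁅x, y⁆ ∈ c i.castSucc

end MoreDefs

/-!
Petravchuk's argument. For a derivation `D` of `L` and an ideal `J`, the subspaces
`U_n(J) = ∑_{m ≤ n} D^m J` (`iterateSpan D J n`) are ideals of `L`. Expanding `D^{2i} ⁅a, b⁆`
by the Leibniz rule shows `⁅U_{n+1}(J), U_{n+1}(J)⁆ ⊆ U_{2n+2}(⁅J, J⁆) + U_n(J)` as soon as the
central binomial coefficients `C(2i, i)`, `i ≤ n + 1`, are invertible in `F`. A double induction
on the derived length `e` of `J` and on `n` then makes `U_n(J)` solvable whenever `2^e n < p`;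
for `n = 1` this says `J + D J` is solvable, so `D` maps the radical into itself. Applied to the
derivations `ad y` of an ideal `I`, this makes `R(I)` an ideal of `L`, and a solvable one.
-/

theorem cast_choose_ne_zero {F : Type*} [Field F] {n k : ℕ} (hk : k ≤ n)
    (hn : ringChar F = 0 ∨ n < ringChar F) : (n.choose k : F) ≠ 0 := by
  rw [Ne, ringChar.spec]
  intro hdvd
  rcases hn with hzero | hlt
  · rw [hzero, zero_dvd_iff] at hdvd
    exact (Nat.choose_pos hk).ne' hdvd
  · have hp : (ringChar F).Prime :=
      (CharP.char_is_prime_or_zero F (ringChar F)).resolve_right (by omega)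
    have hfact : ringChar F ∣ n.factorial :=
      hdvd.trans ⟨k.factorial * (n - k).factorial, by
        rw [← mul_assoc, Nat.choose_mul_factorial_mul_factorial hk]⟩
    exact absurd (hp.dvd_factorial.mp hfact) (by omega)

section Solvable

variable {R L : Type*} [CommRing R] [LieRing L] [LieAlgebra R L]

theorem isSolvable_of_lie_le {K V : LieIdeal R L} [IsSolvable V] (h : ⁅K, K⁆ ≤ V) :
    IsSolvable K := by
  obtain ⟨k, hk⟩ := IsSolvable.solvable R V
  rw [LieIdeal.derivedSeries_eq_bot_iff] at hk
  refine IsSolvable.mk (R := R) (k := k + 1) ?_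
  rw [LieIdeal.derivedSeries_eq_bot_iff, derivedSeriesOfIdeal_add, derivedSeriesOfIdeal_succ,
    derivedSeriesOfIdeal_zero, eq_bot_iff, ← hk]
  exact derivedSeriesOfIdeal_mono h k

variable (R L) in
theorem derivedSeries_derivedLength_eq_bot [IsSolvable L] :
    derivedSeries R L (derivedLength R L) = ⊥ :=
  Nat.sInf_mem (IsSolvable.solvable R L)

end Solvable

section IterateSpan

variable {R L : Type*} [CommRing R] [LieRing L] [LieAlgebra R L]
  (D : LieDerivation R L L) (J : LieIdeal R L)

def iterateSpan (n : ℕ) : Submodule R L :=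
  Submodule.span R {x | ∃ m ≤ n, ∃ s ∈ J, D^[m] s = x}

variable {D J}

theorem iterate_mem_iterateSpan {m n : ℕ} (hmn : m ≤ n) {s : L} (hs : s ∈ J) :
    D^[m] s ∈ iterateSpan D J n :=
  Submodule.subset_span ⟨m, hmn, s, hs, rfl⟩

theorem iterateSpan_le {n : ℕ} {P : Submodule R L} (h : ∀ m ≤ n, ∀ s ∈ J, D^[m] s ∈ P) :
    iterateSpan D J n ≤ P :=
  Submodule.span_le.mpr fun _ ⟨m, hm, s, hs, hx⟩ => hx ▸ h m hm s hs

theorem iterateSpan_mono : Monotone (iterateSpan D J) := fun _ _ hn =>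
  iterateSpan_le fun _ hm _ hs => iterate_mem_iterateSpan (hm.trans hn) hs

theorem apply_mem_iterateSpan_succ {n : ℕ} {x : L} (hx : x ∈ iterateSpan D J n) :
    D x ∈ iterateSpan D J (n + 1) := by
  refine iterateSpan_le (P := (iterateSpan D J (n + 1)).comap (D : L →ₗ[R] L))
    (fun m hm s hs => ?_) hx
  rw [Submodule.mem_comap, LieDerivation.coeFn_coe, ← Function.iterate_succ_apply' D]
  exact iterate_mem_iterateSpan (Nat.succ_le_succ hm) hs

theorem lie_iterate_mem_iterateSpan (y : L) {s : L} (hs : s ∈ J) (m : ℕ) :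
    ⁅y, D^[m] s⁆ ∈ iterateSpan D J m := by
  induction m generalizing y with
  | zero => exact iterate_mem_iterateSpan le_rfl (J.lie_mem hs)
  | succ m ih =>
    rw [Function.iterate_succ_apply', eq_sub_of_add_eq (D.apply_lie_eq_add y _).symm]
    exact sub_mem (apply_mem_iterateSpan_succ (ih y)) (iterateSpan_mono m.le_succ (ih (D y)))

theorem lie_iterate_iterate_mem_iterateSpan (k l : ℕ) {a b : L} (ha : a ∈ J) (hb : b ∈ J) :
    ⁅D^[k] a, D^[l] b⁆ ∈ iterateSpan D J (min k l) := by
  rcases le_total k l with hkl | hlk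
  · rw [min_eq_left hkl, ← lie_skew]
    exact neg_mem (lie_iterate_mem_iterateSpan _ ha k)
  · rw [min_eq_right hlk]
    exact lie_iterate_mem_iterateSpan _ hb l

theorem lie_mem_iterateSpan (y : L) {n : ℕ} {x : L} (hx : x ∈ iterateSpan D J n) :
    ⁅y, x⁆ ∈ iterateSpan D J n :=
  iterateSpan_le (P := (iterateSpan D J n).comap (LieAlgebra.ad R L y))
    (fun m hm _ hs => iterateSpan_mono hm (lie_iterate_mem_iterateSpan y hs m)) hx

variable (D J) in
def iterateIdeal (n : ℕ) : LieIdeal R L :=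
  { iterateSpan D J n with lie_mem := lie_mem_iterateSpan _ }

theorem iterateIdeal_zero : iterateIdeal D J 0 = J := by
  refine le_antisymm (iterateSpan_le fun m hm s hs => ?_) fun s hs => ?_
  · rwa [Nat.le_zero.mp hm]
  · exact iterate_mem_iterateSpan (m := 0) le_rfl hs

theorem iterateIdeal_bot (n : ℕ) : iterateIdeal D (⊥ : LieIdeal R L) n = ⊥ :=
  eq_bot_iff.mpr <| iterateSpan_le fun m _ s hs => by
    rw [(LieSubmodule.mem_bot s).mp hs, iterate_map_zero]
    exact zero_mem _

end IterateSpan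

section Field

variable {F L : Type*} [Field F] [LieRing L] [LieAlgebra F L] {D : LieDerivation F L L}
  {J : LieIdeal F L}

open Finset in
theorem lie_iterate_iterate_self_mem {i : ℕ} (hi : ((2 * i).choose i : F) ≠ 0) {a b : L}
    (ha : a ∈ J) (hb : b ∈ J) :
    ⁅D^[i] a, D^[i] b⁆ ∈ iterateSpan D ⁅J, J⁆ (2 * i) ⊔ iterateSpan D J (i - 1) := by
  have hii : (i, i) ∈ antidiagonal (2 * i) :=
    HasAntidiagonal.mem_antidiagonal.mpr (two_mul i).symm
  -- `C(2i, i) • ⁅D^i a, D^i b⁆` is `D^{2i} ⁅a, b⁆` minus the other Leibniz terms, and each of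
  -- those has an exponent `< i` on one side.
  have hleibniz := D.iterate_apply_lie (2 * i) a b
  rw [← add_sum_erase _ _ hii] at hleibniz
  rw [← Submodule.smul_mem_iff _ hi, Nat.cast_smul_eq_nsmul, eq_sub_of_add_eq hleibniz.symm]
  refine sub_mem (Submodule.mem_sup_left ?_) (Submodule.sum_mem _ fun kl hkl => ?_)
  · exact iterate_mem_iterateSpan le_rfl (LieSubmodule.lie_mem_lie ha hb)
  obtain ⟨hne, hkl⟩ := mem_erase.mp hkl
  rw [HasAntidiagonal.mem_antidiagonal] at hkl
  have hk : kl.1 ≠ i := fun h => hne (Prod.ext h (by omega))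
  refine Submodule.mem_sup_right (nsmul_mem (iterateSpan_mono ?_
    (lie_iterate_iterate_mem_iterateSpan _ _ ha hb)) _)
  omega

theorem lie_iterateIdeal_succ_le {n : ℕ} (hn : ∀ i ≤ n + 1, ((2 * i).choose i : F) ≠ 0) :
    ⁅iterateIdeal D J (n + 1), iterateIdeal D J (n + 1)⁆ ≤
      iterateIdeal D ⁅J, J⁆ (2 * (n + 1)) ⊔ iterateIdeal D J n := by
  rw [LieSubmodule.lie_le_iff]
  intro x hx y hy
  rw [← LieSubmodule.mem_toSubmodule, LieSubmodule.sup_toSubmodule]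
  refine LinearMap.BilinMap.apply_apply_mem_of_mem_span _ _ _
    (LieAlgebra.ad F L : L →ₗ[F] Module.End F L) ?_ x y hx hy
  rintro _ ⟨k, hk, a, ha, rfl⟩ _ ⟨l, hl, b, hb, rfl⟩
  change ⁅D^[k] a, D^[l] b⁆ ∈ _
  obtain rfl | hkl := eq_or_ne k l
  · have hmono : iterateSpan D ⁅J, J⁆ (2 * k) ⊔ iterateSpan D J (k - 1) ≤
        iterateSpan D ⁅J, J⁆ (2 * (n + 1)) ⊔ iterateSpan D J n :=
      sup_le_sup (iterateSpan_mono (by omega)) (iterateSpan_mono (by omega))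
    exact hmono (lie_iterate_iterate_self_mem (hn k hk) ha hb)
  · exact Submodule.mem_sup_right
      (iterateSpan_mono (by omega) (lie_iterate_iterate_mem_iterateSpan k l ha hb))

theorem isSolvable_iterateIdeal {e : ℕ} (he : derivedSeriesOfIdeal F L e J = ⊥) (n : ℕ)
    (hchar : ringChar F = 0 ∨ 2 ^ e * n < ringChar F) : IsSolvable (iterateIdeal D J n) := by
  induction e generalizing J n with
  | zero =>
    obtain rfl : J = ⊥ := he
    rw [iterateIdeal_bot]
    infer_instance
  | succ e ihe =>
    have he' : derivedSeriesOfIdeal F L e ⁅J, J⁆ = ⊥ := by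
      rwa [derivedSeriesOfIdeal_add, derivedSeriesOfIdeal_succ, derivedSeriesOfIdeal_zero] at he
    induction n with
    | zero =>
      have := ihe he' 0 (by simpa using Nat.eq_zero_or_pos _)
      rw [iterateIdeal_zero] at this ⊢
      exact isSolvable_of_lie_le le_rfl
    | succ n ihn =>
      have := ihe he' (2 * (n + 1)) (hchar.imp_right fun h => by rw [pow_succ] at h; linarith)
      have := ihn (hchar.imp_right (lt_of_le_of_lt (Nat.mul_le_mul_left _ n.le_succ)))
      have : IsSolvable
          (iterateIdeal D ⁅J, J⁆ (2 * (n + 1)) ⊔ iterateIdeal D J n : LieIdeal F L) :=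
        LieAlgebra.isSolvableAdd F L
      refine isSolvable_of_lie_le (lie_iterateIdeal_succ_le fun i hi =>
        cast_choose_ne_zero (by omega) (hchar.imp_right fun h => ?_))
      rw [pow_succ] at h
      nlinarith [Nat.one_le_two_pow (n := e)]

end Field

theorem apply_mem_radical_of_derivedSeriesOfIdeal_eq_bot {F L : Type*} [Field F] [LieRing L]
    [LieAlgebra F L] [IsNoetherian F L] (D : LieDerivation F L L) {J : LieIdeal F L} {e : ℕ}
    (he : derivedSeriesOfIdeal F L e J = ⊥) (hchar : ringChar F = 0 ∨ 2 ^ e < ringChar F)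
    {x : L} (hx : x ∈ J) : D x ∈ radical F L := by
  have := isSolvable_iterateIdeal (D := D) he 1 (by simpa using hchar)
  exact (LieIdeal.solvable_iff_le_radical F L _).mp this
    (iterate_mem_iterateSpan (m := 1) le_rfl hx)

theorem isCharIdeal_radical_of_solregular {F L : Type*} [Field F] [LieRing L] [LieAlgebra F L]
    [IsNoetherian F L] (h : Solregular F L) : IsCharIdeal F L (radical F L) :=
  fun D _ hx => apply_mem_radical_of_derivedSeriesOfIdeal_eq_bot D
    ((LieIdeal.derivedSeries_eq_bot_iff _ _).mp (derivedSeries_derivedLength_eq_bot F _)) h hx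

def restrictedAd {R L : Type*} [CommRing R] [LieRing L] [LieAlgebra R L] (I : LieIdeal R L)
    (y : L) : LieDerivation R I I where
  toLinearMap := LieModule.toEnd R L I y
  leibniz' a b := by
    ext
    change ⁅y, ⁅(a : L), (b : L)⁆⁆ = ⁅(a : L), ⁅y, (b : L)⁆⁆ - ⁅(b : L), ⁅y, (a : L)⁆⁆
    rw [leibniz_lie, ← lie_skew (b : L)]
    abel

theorem coe_mem_radical_of_isCharIdeal {F L : Type*} [Field F] [LieRing L] [LieAlgebra F L]
    [IsNoetherian F L] {I : LieIdeal F L} {K : LieIdeal F I} (hK : IsCharIdeal F I K)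
    [IsSolvable K] {x : I} (hx : x ∈ K) : (x : L) ∈ radical F L := by
  let f : K →ₗ⁅F⁆ L := I.incl.comp K.incl
  obtain ⟨J, hJ⟩ := (LieSubalgebra.exists_lieIdeal_coe_eq_iff F f.range).mpr <| by
    rintro y _ ⟨z, rfl⟩
    exact ⟨⟨restrictedAd I y z, hK _ _ z.2⟩, rfl⟩
  have : IsSolvable J :=
    (solvable_iff_equiv_solvable (LieEquiv.ofEq (J : LieSubalgebra F L) f.range (by rw [hJ]))).mpr
      inferInstance
  have hxJ : (x : L) ∈ (J : LieSubalgebra F L) := hJ ▸ ⟨⟨x, hx⟩, rfl⟩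
  exact (LieIdeal.solvable_iff_le_radical F L J).mp this hxJ

/-- If `I` is a solregular ideal of `L` then `R(I) ⊆ R(L)`. -/
theorem stmt_2 (F : Type*) [Field F] (L : Type*) [LieRing L] [LieAlgebra F L]
    [FiniteDimensional F L] (I : LieIdeal F L) (h : Solregular F I) :
    ∀ x : I, x ∈ LieAlgebra.radical F I → (x : L) ∈ LieAlgebra.radical F L :=
  fun _ hx => coe_mem_radical_of_isCharIdeal (isCharIdeal_radical_of_solregular h) hx

end Paper
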